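/- In U(gl(2|1))[[t]] the deformed odd generators satisfy the anticommutation relations: {E₂, F₂} = H₂ − (1/16)(T − T')² − (t/4)(T − T')E₃F₂, and {E₃, F₃} = H₃ + (1/16)(T − T')² + (t/4)(T − T')F₂E₃. -/

import Mathlib

noncomputable section

namespace SuperJordanian

open scoped BigOperators

/-- The generalized binomial coefficient `C(1/2, n)`. -/
def cHalf (n : ℕ) : ℂ :=
  (∏ i ∈ Finset.range n, ((1 : ℂ) / 2 - (i : ℂ))) / (n.factorial : ℂ)

/-- Parity for `gl(2|1)`: `p(i,j) = 1` iff exactly one of `i`, `j` equals the third index. -/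
def par (i j : Fin 3) : ℕ :=
  if (i = 2 ∧ j ≠ 2) ∨ (i ≠ 2 ∧ j = 2) then 1 else 0

/-- The generator `e_{ij}` in the free algebra. -/
def gen (i j : Fin 3) : FreeAlgebra ℂ (Fin 3 × Fin 3) := FreeAlgebra.ι ℂ (i, j)

/-- Defining relations of the enveloping algebra `U(gl(2|1))`:
`e_{ij} e_{kl} - (-1)^{p(i,j)p(k,l)} e_{kl} e_{ij}
  = δ_{jk} e_{il} - (-1)^{p(i,j)p(k,l)} δ_{li} e_{kj}`. -/
inductive Rel : FreeAlgebra ℂ (Fin 3 × Fin 3) → FreeAlgebra ℂ (Fin 3 × Fin 3) → Prop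
  | mk (i j k l : Fin 3) :
      Rel (gen i j * gen k l - ((-1 : ℂ) ^ (par i j * par k l)) • (gen k l * gen i j))
        ((if j = k then gen i l else 0)
          - ((-1 : ℂ) ^ (par i j * par k l)) • (if l = i then gen k j else 0))

/-- The enveloping algebra `U = U(gl(2|1))`. -/
abbrev U : Type := RingQuot Rel

/-- The image of `e_{ij}` in `U`. -/
def e (i j : Fin 3) : U := RingQuot.mkAlgHom ℂ Rel (gen i j)

/-- The formal power series ring `U[[t]]`. -/
abbrev V : Type := PowerSeries U

/-- The central formal variable `t`. -/
def tv : V := PowerSeries.X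

/-- The inclusion `U → U[[t]]` as constant power series. -/
def C : U →+* V := PowerSeries.C

def e₁ : U := e 0 1
def f₁ : U := e 1 0
def h₁ : U := e 0 0 - e 1 1
def e₂ : U := e 1 2
def f₂ : U := e 2 1
def h₂ : U := e 1 1 + e 2 2
def e₃ : U := e 0 2
def f₃ : U := e 2 0
def h₃ : U := h₁ + h₂

/-- `s = Σ_{n ≥ 0} C(1/2, n) t^{2n} e₁^{2n}`, so that `s² = 1 + t² e₁²`. -/
def s : V := PowerSeries.mk fun m => if m % 2 = 0 then cHalf (m / 2) • (e₁ ^ m) else 0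

def T : V := tv * C e₁ + s
def T' : V := -(tv * C e₁) + s
def H₁ : V := s * C h₁
def F₁ : V := C f₁ - ((1 : ℂ) / 4) • (tv ^ 2 * C (e₁ * (h₁ ^ 2 - 1)))
def H₂ : V := C h₂ - ((1 : ℂ) / 2) • (tv ^ 2 * C (e₁ ^ 2 * h₁))
def E₂ : V := C e₂ - ((1 : ℂ) / 4) • (tv ^ 2 * C (e₁ * e₃ * (2 * h₁ + 1)))
def F₂ : V := C f₂
def H₃ : V := C h₃ + ((1 : ℂ) / 2) • (tv ^ 2 * C (e₁ ^ 2 * h₁))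
def E₃ : V := C e₃
def F₃ : V := C f₃ + ((1 : ℂ) / 4) • (tv ^ 2 * C (e₁ * f₂ * (2 * h₁ + 1)))

/-- Commutator `[a, b] = ab - ba`. -/
def br (a b : V) : V := a * b - b * a

/-- Anticommutator `{a, b} = ab + ba`. -/
def ac (a b : V) : V := a * b + b * a

/-! Since `s` cancels in `T - T' = 2 t e₁` and `t` is central, both identities are polynomial of
degree two in `t` with coefficients in `U`. The `t⁰` parts are the undeformed relations
`{e₂, f₂} = h₂` and `{e₃, f₃} = h₃`; the `t²` parts reduce, by `[h₁, f₂] = f₂`, `[h₁, e₃] = e₃`,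
`[e₁, f₂] = [e₁, e₃] = 0` and `{e₃, f₂} = e₁`, to
`{e₁ e₃ (2h₁ + 1), f₂} = 2 e₁² h₁ + e₁² + 2 e₁ e₃ f₂` and its mirror image. -/

lemma e_mul_e (i j k l : Fin 3) :
    e i j * e k l = ((-1 : ℂ) ^ (par i j * par k l)) • (e k l * e i j)
      + ((if j = k then e i l else 0)
        - ((-1 : ℂ) ^ (par i j * par k l)) • (if l = i then e k j else 0)) := by
  rw [← sub_eq_iff_eq_add']
  simpa [e, apply_ite (RingQuot.mkAlgHom ℂ Rel)] using
    RingQuot.mkAlgHom_rel ℂ (Rel.mk i j k l)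

lemma e₂_f₂_anticomm : e₂ * f₂ + f₂ * e₂ = h₂ := by
  simp only [e₂, f₂, h₂, e_mul_e 1 2 2 1]
  simp [par]; module

lemma e₃_f₂_anticomm : e₃ * f₂ + f₂ * e₃ = e₁ := by
  simp only [e₃, f₂, e₁, e_mul_e 0 2 2 1]
  simp [par]; module

lemma e₃_f₃_anticomm : e₃ * f₃ + f₃ * e₃ = h₃ := by
  simp only [e₃, f₃, h₃, h₁, h₂, e_mul_e 0 2 2 0]
  simp [par]; module

lemma f₂_mul_e₁ : f₂ * e₁ = e₁ * f₂ := by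
  simpa [par, f₂, e₁] using e_mul_e 2 1 0 1

lemma e₃_mul_e₁ : e₃ * e₁ = e₁ * e₃ := by
  simpa [par, e₃, e₁] using e_mul_e 0 2 0 1

lemma h₁_mul_f₂ : h₁ * f₂ = f₂ * h₁ + f₂ := by
  simp only [h₁, f₂, sub_mul, mul_sub, e_mul_e 0 0 2 1, e_mul_e 1 1 2 1]
  simp [par]; abel

lemma h₁_mul_e₃ : h₁ * e₃ = e₃ * h₁ + e₃ := by
  simp only [h₁, e₃, sub_mul, mul_sub, e_mul_e 0 0 0 2, e_mul_e 1 1 0 2]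
  simp [par]; abel

lemma e₁e₃_f₂_anticomm :
    e₁ * e₃ * (2 * h₁ + 1) * f₂ + f₂ * (e₁ * e₃ * (2 * h₁ + 1))
      = 2 • (e₁ ^ 2 * h₁) + e₁ ^ 2 + 2 • (e₁ * e₃ * f₂) := by
  calc e₁ * e₃ * (2 * h₁ + 1) * f₂ + f₂ * (e₁ * e₃ * (2 * h₁ + 1))
      = e₁ * e₃ * (2 * (h₁ * f₂) + f₂) + f₂ * e₁ * e₃ * (2 * h₁ + 1) := by noncomm_ring
    _ = e₁ * e₃ * (2 * (f₂ * h₁ + f₂) + f₂) + e₁ * (f₂ * e₃) * (2 * h₁ + 1) := by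
      rw [h₁_mul_f₂, f₂_mul_e₁, mul_assoc e₁ f₂ e₃]
    _ = 2 • (e₁ * e₃ * f₂) + e₁ * (e₃ * f₂ + f₂ * e₃) * (2 * h₁ + 1) := by noncomm_ring
    _ = 2 • (e₁ ^ 2 * h₁) + e₁ ^ 2 + 2 • (e₁ * e₃ * f₂) := by
      rw [e₃_f₂_anticomm]; noncomm_ring

lemma e₁f₂_e₃_anticomm :
    e₁ * f₂ * (2 * h₁ + 1) * e₃ + e₃ * (e₁ * f₂ * (2 * h₁ + 1))
      = 2 • (e₁ ^ 2 * h₁) + e₁ ^ 2 + 2 • (e₁ * f₂ * e₃) := by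
  calc e₁ * f₂ * (2 * h₁ + 1) * e₃ + e₃ * (e₁ * f₂ * (2 * h₁ + 1))
      = e₁ * f₂ * (2 * (h₁ * e₃) + e₃) + e₃ * e₁ * f₂ * (2 * h₁ + 1) := by noncomm_ring
    _ = e₁ * f₂ * (2 * (e₃ * h₁ + e₃) + e₃) + e₁ * (e₃ * f₂) * (2 * h₁ + 1) := by
      rw [h₁_mul_e₃, e₃_mul_e₁, mul_assoc e₁ e₃ f₂]
    _ = 2 • (e₁ * f₂ * e₃) + e₁ * (e₃ * f₂ + f₂ * e₃) * (2 * h₁ + 1) := by noncomm_ring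
    _ = 2 • (e₁ ^ 2 * h₁) + e₁ ^ 2 + 2 • (e₁ * f₂ * e₃) := by
      rw [e₃_f₂_anticomm]; noncomm_ring

lemma tv_commute_C (x : U) : Commute tv (C x) := (PowerSeries.commute_X (C x)).symm

lemma ac_comm (a b : V) : ac a b = ac b a := add_comm _ _

lemma ac_C_add_smul_tv_sq (a b c : U) (k : ℂ) :
    ac (C a + k • (tv ^ 2 * C b)) (C c)
      = C (a * c + c * a) + k • (tv ^ 2 * C (b * c + c * b)) := by
  have hc : C c * tv ^ 2 = tv ^ 2 * C c := ((tv_commute_C c).pow_left 2).eq.symm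
  simp only [ac, add_mul, mul_add, smul_mul_assoc, mul_smul_comm, smul_add, map_add, map_mul,
    mul_assoc]
  rw [← mul_assoc (C c), hc, mul_assoc]
  abel

lemma T_sub_T' : T - T' = (2 : ℂ) • (tv * C e₁) := by
  rw [T, T', two_smul]; abel

lemma T_sub_T'_sq : (T - T') ^ 2 = (4 : ℂ) • (tv ^ 2 * C (e₁ ^ 2)) := by
  rw [T_sub_T', smul_pow, (tv_commute_C e₁).mul_pow, map_pow]; norm_num

lemma tv_mul_T_sub_T'_mul (x y : U) :
    tv * ((T - T') * C x * C y) = (2 : ℂ) • (tv ^ 2 * C (e₁ * x * y)) := by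
  rw [T_sub_T', smul_mul_assoc, smul_mul_assoc, mul_smul_comm, map_mul, map_mul]
  congr 1
  noncomm_ring

/-- anticommutators `{E₂, F₂}` and `{E₃, F₃}` in `U(gl(2|1))[[t]]`. -/
theorem statement5 :
    ac E₂ F₂ = H₂ - ((1 : ℂ) / 16) • (T - T') ^ 2
        - ((1 : ℂ) / 4) • (tv * ((T - T') * E₃ * F₂)) ∧
    ac E₃ F₃ = H₃ + ((1 : ℂ) / 16) • (T - T') ^ 2
        + ((1 : ℂ) / 4) • (tv * ((T - T') * F₂ * E₃)) := by
  have E₂_eq : E₂ = C e₂ + (-(1 / 4 : ℂ)) • (tv ^ 2 * C (e₁ * e₃ * (2 * h₁ + 1))) := by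
    rw [E₂, neg_smul, ← sub_eq_add_neg]
  rw [ac_comm E₃, E₂_eq, F₃, F₂, E₃, ac_C_add_smul_tv_sq, ac_C_add_smul_tv_sq,
    e₂_f₂_anticomm, e₁e₃_f₂_anticomm, e₁f₂_e₃_anticomm, add_comm (f₃ * e₃), e₃_f₃_anticomm,
    H₂, H₃, T_sub_T'_sq, tv_mul_T_sub_T'_mul, tv_mul_T_sub_T'_mul]
  -- `module` finds no usable `ℤ`-module structure on `V`, so subtraction is traded for `ℂ`-scalars
  simp only [map_add, map_nsmul, mul_add, mul_smul_comm, sub_eq_add_neg, ← neg_smul]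
  constructor <;> module

end SuperJordanian
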